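/- Let X be a topological space, {U_i}_{i∈I} an open cover, and (χ_i) a partition of unity subordinate to the cover (supp χ_i ⊆ U_i, locally finite, summing to 1). For a presheaf of real vector spaces Ω of functions/forms admitting multiplication by smooth bump functions and extension by zero from supp χ_j ∩ U to U, the augmented Čech complex 0 → Ω(X) → ∏_i Ω(U_i) → ∏_{i₀,i₁} Ω(U_{i₀}∩U_{i₁}) → ··· with the alternating-sum Čech differential δ admits a contracting homotopy κ defined by (κα)_{i₀,...,i_{p-1}} = Σ_j (extension by zero of χ_j α_{j,i₀,...,i_{p-1}}), satisfying δκ + κδ = id; hence the augmented Čech complex is exact. -/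
import Mathlib


open scoped BigOperators
open Classical

variable {X I : Type*}

/-- The space of Čech `p`-cochains for the cover `U`: a `p`-cochain assigns a real
number to each multi-index `σ : Fin (p+1) → I` and each point `x` of the
intersection `U (σ 0) ∩ ⋯ ∩ U (σ p)`. -/
def CechCochain (U : I → Set X) (p : ℕ) : Type _ :=
  (σ : Fin (p + 1) → I) → (x : X) → (∀ k, x ∈ U (σ k)) → ℝ

/-- The Čech differential `(δα)_{i₀,…,i_{p+1}} = Σ_q (-1)^q α_{i₀,…,î_q,…,i_{p+1}}`. -/
def cechDiff (U : I → Set X) (p : ℕ) (α : CechCochain U p) : CechCochain U (p + 1) :=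
  fun σ x hx => ∑ q : Fin (p + 2),
    (-1 : ℝ) ^ (q : ℕ) * α (σ ∘ q.succAbove) x (fun k => hx (q.succAbove k))

/-- The augmentation `Ω(X) → C⁰`, restriction of a global function. -/
def cechAug (U : I → Set X) (f : X → ℝ) : CechCochain U 0 :=
  fun _ x _ => f x

/-- The contracting homotopy `κ : C^{p+1} → C^p` associated with a partition of
unity `χ`: `(κα)_{i₀,…,i_p} = Σ_j` (extension by zero of `χ_j α_{j,i₀,…,i_p}`). -/

noncomputable def cechHomotopy (U : I → Set X) (χ : I → X → ℝ) (p : ℕ)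
    (α : CechCochain U (p + 1)) : CechCochain U p :=
  fun σ x hx => ∑ᶠ j : I,
    if h : x ∈ U j then χ j x * α (Fin.cons j σ) x (fun k => Fin.cases h hx k) else 0

/-- The homotopy `κ₀ : C⁰ → Ω(X)` in degree `-1` (augmentation level). -/

noncomputable def cechHomotopyZero (U : I → Set X) (χ : I → X → ℝ) (α : CechCochain U 0) :
    X → ℝ :=
  fun x => ∑ᶠ j : I,
    if h : x ∈ U j then χ j x * α (fun _ => j) x (fun _ => h) else 0

lemma alpha_congr {U : I → Set X} {p : ℕ} (α : CechCochain U p) {σ₁ σ₂ : Fin (p+1) → I}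
    (h : σ₁ = σ₂) (x : X) (h1 : ∀ k, x ∈ U (σ₁ k)) (h2 : ∀ k, x ∈ U (σ₂ k)) :
    α σ₁ x h1 = α σ₂ x h2 := by subst h; rfl

lemma cons_comp_zero {n : ℕ} (j : I) (σ : Fin (n+1) → I) :
    (Fin.cons j σ : Fin (n+2) → I) ∘ (0 : Fin (n+2)).succAbove = σ := by
  funext k; simp [Fin.succAbove_zero]

lemma cons_comp_succ {n : ℕ} (j : I) (σ : Fin (n+1) → I) (q : Fin (n+1)) :
    (Fin.cons j σ : Fin (n+2) → I) ∘ (q.succ).succAbove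
      = Fin.cons j (σ ∘ q.succAbove) := by
  funext k
  refine Fin.cases ?_ (fun i => ?_) k
  · simp [Fin.succ_succAbove_zero]
  · simp [Fin.succ_succAbove_succ]

/-- For an open cover `{U_i}` of `X` with a subordinate partition of
unity `(χ_i)` (supports contained in the `U_i`, locally finite, summing to `1`),
the operator `κ` defined by `(κα)_{i₀,…,i_{p-1}} = Σ_j` (extension by zero of
`χ_j α_{j,i₀,…,i_{p-1}}`) is a contracting homotopy for the augmented Čech
complex `0 → Ω(X) → ∏ Ω(U_i) → ∏ Ω(U_{i₀}∩U_{i₁}) → ⋯`: it satisfies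
`δκ + κδ = id` in every degree (including the augmentation degrees); hence the
augmented Čech complex is exact. -/
theorem cech_complex_contracting_homotopy
    (U : I → Set X) (hcov : ∀ x : X, ∃ i, x ∈ U i)
    (χ : I → X → ℝ)
    (hsupp : ∀ j x, χ j x ≠ 0 → x ∈ U j)
    (hfin : ∀ x : X, {j : I | χ j x ≠ 0}.Finite)
    (hsum : ∀ x : X, ∑ᶠ j : I, χ j x = 1) :
    (∀ (f : X → ℝ) (x : X), cechHomotopyZero U χ (cechAug U f) x = f x) ∧
    (∀ (α : CechCochain U 0) (σ : Fin 1 → I) (x : X) (hx : ∀ k, x ∈ U (σ k)),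
      cechAug U (cechHomotopyZero U χ α) σ x hx
        + cechHomotopy U χ 0 (cechDiff U 0 α) σ x hx = α σ x hx) ∧
    (∀ (p : ℕ) (α : CechCochain U (p + 1)) (σ : Fin (p + 2) → I) (x : X)
        (hx : ∀ k, x ∈ U (σ k)),
      cechDiff U p (cechHomotopy U χ p α) σ x hx
        + cechHomotopy U χ (p + 1) (cechDiff U (p + 1) α) σ x hx = α σ x hx) := by
  have key : ∀ (x : X) (A : (j : I) → x ∈ U j → ℝ),
      (∑ᶠ j : I, if h : x ∈ U j then χ j x * A j h else 0)
        = ∑ j ∈ (hfin x).toFinset, if h : x ∈ U j then χ j x * A j h else 0 := by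
    intro x A
    apply finsum_eq_finset_sum_of_support_subset
    intro j hj
    simp only [Function.mem_support] at hj
    simp only [Set.Finite.coe_toFinset, Set.mem_setOf_eq]
    intro h0
    apply hj
    split <;> simp [h0]
  have hsum' : ∀ x : X, ∑ j ∈ (hfin x).toFinset, χ j x = 1 := by
    intro x
    rw [← hsum x]
    exact (finsum_eq_finset_sum_of_support_subset _
      (by intro j hj; simpa using hj)).symm
  refine ⟨?_, ?_, ?_⟩
  · intro f x
    show (∑ᶠ j : I, if h : x ∈ U j then χ j x * f x else 0) = f x
    rw [key x (fun j _ => f x)]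
    calc ∑ j ∈ (hfin x).toFinset, (if h : x ∈ U j then χ j x * f x else 0)
        = ∑ j ∈ (hfin x).toFinset, χ j x * f x := by
          refine Finset.sum_congr rfl fun j hj => ?_
          rw [dif_pos (hsupp j x (by simpa using hj))]
      _ = f x := by rw [← Finset.sum_mul, hsum' x, one_mul]
  · intro α σ x hx
    set s := (hfin x).toFinset with hs
    have e1 : cechAug U (cechHomotopyZero U χ α) σ x hx
        = ∑ j ∈ s, (if h : x ∈ U j then χ j x * α (fun _ => j) x (fun _ => h) else 0) :=
      key x _
    have e2 : cechHomotopy U χ 0 (cechDiff U 0 α) σ x hx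
        = ∑ j ∈ s, (χ j x * α σ x hx -
            (if h : x ∈ U j then χ j x * α (fun _ => j) x (fun _ => h) else 0)) := by
      rw [show cechHomotopy U χ 0 (cechDiff U 0 α) σ x hx
          = ∑ j ∈ s, (if h : x ∈ U j then χ j x *
              (∑ q : Fin 2, (-1:ℝ)^(q:ℕ) * α ((Fin.cons j σ) ∘ q.succAbove) x
                (fun k => Fin.cases (motive := fun k' : Fin 2 => x ∈ U ((Fin.cons j σ : Fin 2 → I) k'))
                  h hx (q.succAbove k))) else 0) from key x _]
      refine Finset.sum_congr rfl fun j hj => ?_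
      have hjU : x ∈ U j := hsupp j x (by simp [hs] at hj; exact hj)
      rw [dif_pos hjU, dif_pos hjU]
      have hD : (∑ q : Fin 2, (-1:ℝ)^(q:ℕ) * α ((Fin.cons j σ) ∘ q.succAbove) x
                (fun k => Fin.cases (motive := fun k' : Fin 2 => x ∈ U ((Fin.cons j σ : Fin 2 → I) k'))
                  hjU hx (q.succAbove k)))
          = α σ x hx - α (fun _ => j) x (fun _ => hjU) := by
        rw [Fin.sum_univ_succ, Fin.sum_univ_one]
        have h0 : α ((Fin.cons j σ) ∘ (0 : Fin 2).succAbove) x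
              (fun k => Fin.cases (motive := fun k' : Fin 2 => x ∈ U ((Fin.cons j σ : Fin 2 → I) k'))
                hjU hx ((0 : Fin 2).succAbove k)) = α σ x hx :=
          alpha_congr α (cons_comp_zero j σ) x _ _
        have h1 : α ((Fin.cons j σ) ∘ ((0 : Fin 1).succ).succAbove) x
              (fun k => Fin.cases (motive := fun k' : Fin 2 => x ∈ U ((Fin.cons j σ : Fin 2 → I) k'))
                hjU hx (((0 : Fin 1).succ).succAbove k)) = α (fun _ => j) x (fun _ => hjU) :=
          alpha_congr α ((cons_comp_succ j σ 0).trans (funext fun k => by fin_cases k; rfl)) x _ _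
        rw [h0, h1]
        norm_num [sub_eq_add_neg]
      rw [hD]
      ring
    rw [e1, e2, Finset.sum_sub_distrib, ← Finset.sum_mul, hsum' x, one_mul]
    ring
  · intro p α σ x hx
    set s := (hfin x).toFinset with hs
    have e1 : cechDiff U p (cechHomotopy U χ p α) σ x hx
        = ∑ q : Fin (p+2), (-1:ℝ)^(q:ℕ) * ∑ j ∈ s,
            (if h : x ∈ U j then χ j x * α (Fin.cons j (σ ∘ q.succAbove)) x
               (fun k => Fin.cases h (fun i => hx (q.succAbove i)) k) else 0) := by
      refine Finset.sum_congr rfl fun q _ => ?_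
      congr 1
      exact key x _
    have e2 : cechHomotopy U χ (p + 1) (cechDiff U (p + 1) α) σ x hx
        = ∑ j ∈ s, (χ j x * α σ x hx - ∑ q : Fin (p+2), (-1:ℝ)^(q:ℕ) *
            (if h : x ∈ U j then χ j x * α (Fin.cons j (σ ∘ q.succAbove)) x
               (fun k => Fin.cases h (fun i => hx (q.succAbove i)) k) else 0)) := by
      rw [show cechHomotopy U χ (p + 1) (cechDiff U (p + 1) α) σ x hx
          = ∑ j ∈ s, (if h : x ∈ U j then χ j x *
              (∑ q : Fin (p+3), (-1:ℝ)^(q:ℕ) * α ((Fin.cons j σ) ∘ q.succAbove) x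
                (fun k => Fin.cases (motive := fun k' : Fin (p+3) => x ∈ U ((Fin.cons j σ : Fin (p+3) → I) k')) h hx (q.succAbove k))) else 0) from key x _]
      refine Finset.sum_congr rfl fun j hj => ?_
      have hjU : x ∈ U j := hsupp j x (by simp [hs] at hj; exact hj)
      rw [dif_pos hjU]
      have hD : (∑ q : Fin (p+3), (-1:ℝ)^(q:ℕ) * α ((Fin.cons j σ) ∘ q.succAbove) x
                (fun k => Fin.cases (motive := fun k' : Fin (p+3) => x ∈ U ((Fin.cons j σ : Fin (p+3) → I) k')) hjU hx (q.succAbove k)))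
          = α σ x hx - ∑ q' : Fin (p+2), (-1:ℝ)^(q':ℕ) *
              α (Fin.cons j (σ ∘ q'.succAbove)) x
                (fun k => Fin.cases hjU (fun i => hx (q'.succAbove i)) k) := by
        rw [Fin.sum_univ_succ]
        have h0 : α ((Fin.cons j σ) ∘ (0 : Fin (p+3)).succAbove) x
              (fun k => Fin.cases (motive := fun k' : Fin (p+3) => x ∈ U ((Fin.cons j σ : Fin (p+3) → I) k')) hjU hx ((0 : Fin (p+3)).succAbove k)) = α σ x hx :=
          alpha_congr α (cons_comp_zero j σ) x _ _
        rw [h0]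
        simp only [Fin.val_zero, pow_zero, one_mul, Fin.val_succ, pow_succ]
        rw [sub_eq_add_neg, ← Finset.sum_neg_distrib]
        congr 1
        refine Finset.sum_congr rfl fun q' _ => ?_
        rw [alpha_congr α (cons_comp_succ j σ q') x _
          (fun k => Fin.cases hjU (fun i => hx (q'.succAbove i)) k)]
        ring
      rw [hD, mul_sub, Finset.mul_sum]
      congr 1
      refine Finset.sum_congr rfl fun q' _ => ?_
      rw [dif_pos hjU]
      ring
    rw [e1, e2, Finset.sum_sub_distrib, ← Finset.sum_mul, hsum' x, one_mul]
    have hcomm : ∑ j ∈ s, ∑ q : Fin (p+2), (-1:ℝ)^(q:ℕ) *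
        (if h : x ∈ U j then χ j x * α (Fin.cons j (σ ∘ q.succAbove)) x
           (fun k => Fin.cases h (fun i => hx (q.succAbove i)) k) else 0)
        = ∑ q : Fin (p+2), (-1:ℝ)^(q:ℕ) * ∑ j ∈ s,
          (if h : x ∈ U j then χ j x * α (Fin.cons j (σ ∘ q.succAbove)) x
             (fun k => Fin.cases h (fun i => hx (q.succAbove i)) k) else 0) := by
      rw [Finset.sum_comm]
      exact Finset.sum_congr rfl fun q _ => (Finset.mul_sum _ _ _).symm
    rw [hcomm]
    ring
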